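/- Let G' be a complete graph on n ≥ 3 vertices with all edge weights in {1,2,3}, let F be a connected Eulerian multigraph spanning the vertices of G' (every vertex has even degree in F), and let P be the Hamiltonian path obtained by following an Euler tour of F and shortcutting repeated vertices. Then w(P) ≤ (3/2)·w(F). -/
import Mathlib


/-- Let the complete graph on `N ≥ 3` vertices have edge weights `w` in
`{1,2,3}`.  Let `c 0, ..., c L` be an Euler tour of a connected Eulerian multigraph `F`
spanning all vertices, viewed as a closed walk (`c L = c 0`) with consecutive vertices
distinct, whose weight is `w(F)`.  Let `f` pick out visit times `f 0 < ... < f k` of the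
Hamiltonian path `P` obtained by following the tour and shortcutting repeated vertices
(so `c ∘ f` is injective on `{0,...,k}` and hits every vertex).  Then
`w(P) ≤ (3/2) * w(F)`. -/
theorem stmt15 (N : ℕ) (hN : 3 ≤ N) (w : Fin N → Fin N → ℕ)
    (hsymm : ∀ u v, w u v = w v u)
    (hw : ∀ u v : Fin N, u ≠ v → w u v ∈ ({1, 2, 3} : Set ℕ))
    (L k : ℕ) (hL : 1 ≤ L) (c : ℕ → Fin N)
    (hclosed : c L = c 0)
    (hstep : ∀ i < L, c i ≠ c (i + 1))
    (f : ℕ → ℕ) (hf0 : f 0 = 0) (hfk : f k ≤ L)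
    (hmono : StrictMonoOn f (Set.Iic k))
    (hinj : ∀ j1 j2, j1 ≤ k → j2 ≤ k → c (f j1) = c (f j2) → j1 = j2)
    (hspan : ∀ x : Fin N, ∃ j ≤ k, c (f j) = x) :
    2 * ∑ j ∈ Finset.range k, w (c (f j)) (c (f (j + 1))) ≤
      3 * ∑ i ∈ Finset.range L, w (c i) (c (i + 1)) := by
  have hwle : ∀ u v : Fin N, u ≠ v → w u v ≤ 3 := by
    intro u v h
    rcases hw u v h with h1 | h1 | h1 <;> simp_all
  have hwge : ∀ i < L, 1 ≤ w (c i) (c (i + 1)) := by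
    intro i hi
    rcases hw _ _ (hstep i hi) with h1 | h1 | h1 <;> simp_all
  have hmon : MonotoneOn f (Set.Iic k) := hmono.monotoneOn
  -- key per-segment bound
  have key : ∀ j < k, 2 * w (c (f j)) (c (f (j + 1))) ≤
      3 * ∑ i ∈ Finset.Ico (f j) (f (j + 1)), w (c i) (c (i + 1)) := by
    intro j hj
    have hjk : j ∈ Set.Iic k := Set.mem_Iic.2 hj.le
    have hj1k : j + 1 ∈ Set.Iic k := Set.mem_Iic.2 hj
    have hlt : f j < f (j + 1) := hmono hjk hj1k (by omega)
    have hle : f (j + 1) ≤ f k := hmon hj1k (Set.mem_Iic.2 le_rfl) hj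
    have hub : ∀ i ∈ Finset.Ico (f j) (f (j + 1)), 1 ≤ w (c i) (c (i + 1)) := by
      intro i hi
      have := Finset.mem_Ico.1 hi
      exact hwge i (by omega)
    by_cases hcase : f (j + 1) = f j + 1
    · have : Finset.Ico (f j) (f (j + 1)) = {f j} := by
        rw [hcase]; simp
      rw [this, Finset.sum_singleton, ← hcase]
      omega
    · have hcard : 2 ≤ (Finset.Ico (f j) (f (j + 1))).card := by
        rw [Nat.card_Ico]; omega
      have hsum : (Finset.Ico (f j) (f (j + 1))).card * 1 ≤
          ∑ i ∈ Finset.Ico (f j) (f (j + 1)), w (c i) (c (i + 1)) := by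
        apply Finset.card_nsmul_le_sum _ _ _ hub
      have hne : c (f j) ≠ c (f (j + 1)) := fun h =>
        by have := hinj j (j + 1) hj.le hj h; omega
      have := hwle _ _ hne
      omega
  -- segments are consecutive
  have hseg : ∀ m ≤ k, ∑ j ∈ Finset.range m,
      (∑ i ∈ Finset.Ico (f j) (f (j + 1)), w (c i) (c (i + 1))) =
      ∑ i ∈ Finset.Ico (f 0) (f m), w (c i) (c (i + 1)) := by
    intro m hm
    induction m with
    | zero => simp
    | succ n ih =>
      rw [Finset.sum_range_succ, ih (by omega)]
      apply Finset.sum_Ico_consecutive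
      · exact hmon (Set.mem_Iic.2 (by omega)) (Set.mem_Iic.2 (by omega)) (by omega)
      · exact hmon (Set.mem_Iic.2 (by omega)) (Set.mem_Iic.2 hm) (by omega)
  have h1 : 2 * ∑ j ∈ Finset.range k, w (c (f j)) (c (f (j + 1))) ≤
      3 * ∑ j ∈ Finset.range k,
        (∑ i ∈ Finset.Ico (f j) (f (j + 1)), w (c i) (c (i + 1))) := by
    rw [Finset.mul_sum, Finset.mul_sum]
    apply Finset.sum_le_sum
    intro j hj
    exact key j (Finset.mem_range.1 hj)
  rw [hseg k le_rfl, hf0] at h1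
  refine h1.trans ?_
  have hsub : Finset.Ico 0 (f k) ⊆ Finset.range L := by
    intro i hi
    simp only [Finset.mem_Ico, Finset.mem_range] at *
    omega
  exact Nat.mul_le_mul_left 3 (Finset.sum_le_sum_of_subset hsub)
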